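/- arXiv:2401.08473 — 5 statements merged into one kernel-verified Lean document; each statement's English description precedes it below -/
import Mathlib

section
/- Let (K, d) be a compact metric space of diameter at most 1 and μ a d_h-Ahlfors regular Borel probability measure on K. Let G : K × K → ℝ be measurable with the two-sided bound C₁ d(x,y)^{s d_w - d_h} − C₂ ≤ G(x,y) ≤ C₃ d(x,y)^{s d_w - d_h} for all x ≠ y, where 0 < s < d_h/d_w and C₁, C₂, C₃ > 0. Then for p > 0 and x ∈ K, y ↦ G(x,y) belongs to L^p(K, μ) if and only if s > (p−1) d_h / (p d_w). -/
/-!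
Put `t = d_h - s d_w > 0`. Off the diagonal the kernel is squeezed between
`C₁ d(x,y)^{-t} - C₂` and `C₃ d(x,y)^{-t}`, and constants lie in `L^p` of the finite measure `μ`,
so `G(x,·) ∈ L^p` if and only if `d(x,·)^{-t} ∈ L^p`, i.e. `∫ d(x,y)^{-tp} dμ(y) < ∞`. Cut the
unit ball around `x` into the annuli `ρ^{n+1} < d(x,y) ≤ ρ^n`. For `ρ` small, Ahlfors regularity
makes the measure of the `n`-th annulus comparable to `ρ^{n d_h}`, so the integral is comparable
to the geometric series `∑ ρ^{n (d_h - tp)}`, which converges exactly when `tp < d_h`, that is,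
when `s > (p - 1) d_h / (p d_w)`.
-/

open MeasureTheory Metric Set Filter Topology
open scoped ENNReal

lemma tendsto_const_mul_rpow_nhdsGT_zero (C : ℝ) {d : ℝ} (hd : 0 < d) :
    Tendsto (fun r : ℝ => C * r ^ d) (𝓝[>] 0) (𝓝 0) := by
  simpa [Real.zero_rpow hd.ne'] using
    ((Real.continuousAt_rpow_const 0 d (.inr hd.le)).const_mul C).tendsto.mono_left
      nhdsWithin_le_nhds

lemma ENNReal.tsum_lt_top_iff_of_le_mul_of_mul_le {a g : ℕ → ℝ≥0∞} {l u : ℝ≥0∞} (hl : l ≠ 0)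
    (hu : u ≠ ∞) (hla : ∀ n, l * g n ≤ a n) (hau : ∀ n, a n ≤ u * g n) :
    ∑' n, a n < ∞ ↔ ∑' n, g n < ∞ := by
  refine ⟨fun h => lt_top_of_mul_ne_top_right ?_ hl, fun h => ?_⟩
  · rw [← ENNReal.tsum_mul_left]
    exact (lt_of_le_of_lt (ENNReal.tsum_le_tsum hla) h).ne
  · calc ∑' n, a n ≤ ∑' n, u * g n := ENNReal.tsum_le_tsum hau
      _ = u * ∑' n, g n := ENNReal.tsum_mul_left
      _ < ∞ := mul_lt_top hu.lt_top h

theorem MeasureTheory.memLp_iff_of_mul_sub_le_of_le_mul {α : Type*} [MeasurableSpace α]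
    {μ : Measure α} [IsFiniteMeasure μ] {p : ℝ≥0∞} {f g : α → ℝ} {C₁ C₂ C₃ : ℝ}
    (hf : AEStronglyMeasurable f μ) (hg : AEStronglyMeasurable g μ) (hg₀ : ∀ᵐ y ∂μ, 0 ≤ g y)
    (hC₁ : 0 < C₁) (hC₂ : 0 ≤ C₂) (hC₃ : 0 ≤ C₃) (hlow : ∀ᵐ y ∂μ, C₁ * g y - C₂ ≤ f y)
    (hup : ∀ᵐ y ∂μ, f y ≤ C₃ * g y) :
    MemLp f p μ ↔ MemLp g p μ := by
  constructor
  · intro hf'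
    refine ((hf'.add (memLp_const C₂)).const_mul C₁⁻¹).of_le hg ?_
    filter_upwards [hg₀, hlow] with y hy₀ hy
    rw [Real.norm_of_nonneg hy₀, norm_mul, norm_inv, Real.norm_of_nonneg hC₁.le,
      le_inv_mul_iff₀ hC₁, Pi.add_apply, Real.norm_eq_abs]
    exact (sub_le_iff_le_add.1 hy).trans (le_abs_self _)
  · intro hg'
    refine ((memLp_const C₂).add (hg'.const_mul C₃)).of_le hf ?_
    filter_upwards [hg₀, hlow, hup] with y hy₀ hyl hyu
    rw [Pi.add_apply, Real.norm_eq_abs, Real.norm_of_nonneg (by positivity), abs_le]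
    constructor <;> nlinarith [mul_nonneg hC₁.le hy₀, mul_nonneg hC₃ hy₀]

namespace Metric

variable {X : Type*} [MetricSpace X]

def annulus (x : X) (ρ : ℝ) (n : ℕ) : Set X := {y | dist x y ∈ Ioc (ρ ^ (n + 1)) (ρ ^ n)}

variable {ρ : ℝ}

lemma annulus_eq_closedBall_diff (x : X) (ρ : ℝ) (n : ℕ) :
    annulus x ρ n = closedBall x (ρ ^ n) \ closedBall x (ρ ^ (n + 1)) := by
  ext y
  simp [annulus, dist_comm, and_comm]

lemma annulus_subset_closedBall (x : X) (ρ : ℝ) (n : ℕ) : annulus x ρ n ⊆ closedBall x (ρ ^ n) :=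
  (annulus_eq_closedBall_diff x ρ n).trans_subset sdiff_subset

lemma measurableSet_annulus [MeasurableSpace X] [OpensMeasurableSpace X] (x : X) (ρ : ℝ)
    (n : ℕ) : MeasurableSet (annulus x ρ n) :=
  (continuous_const.dist continuous_id).measurable measurableSet_Ioc

lemma pairwise_disjoint_annulus (x : X) (hρ₀ : 0 ≤ ρ) (hρ₁ : ρ ≤ 1) :
    Pairwise (Function.onFun Disjoint (annulus x ρ)) := fun _ _ hmn =>
  ((pow_right_anti₀ hρ₀ hρ₁).pairwise_disjoint_on_Ioc_succ hmn).preimage _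

lemma iUnion_annulus (x : X) (hρ₀ : 0 < ρ) (hρ₁ : ρ < 1) :
    ⋃ n, annulus x ρ n = closedBall x 1 \ {x} := by
  ext y
  simp only [annulus, mem_iUnion, mem_ofPred_eq, Set.mem_sdiff, mem_closedBall', mem_singleton_iff]
  constructor
  · rintro ⟨n, hlt, hle⟩
    exact ⟨hle.trans (pow_le_one₀ hρ₀.le hρ₁.le),
      fun h => (pow_pos hρ₀ _).not_ge (by simpa [h] using hlt.le)⟩
  · rintro ⟨hle, hne⟩
    exact exists_nat_pow_near_of_lt_one (dist_pos.2 (Ne.symm hne)) hle hρ₀ hρ₁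

end Metric

section AhlforsRegular

variable {X : Type*} [MetricSpace X] [MeasurableSpace X] {μ : Measure X} {x : X} {c C d : ℝ}

def IsAhlforsRegularAt (μ : Measure X) (x : X) (c C d : ℝ) : Prop :=
  ∀ r ∈ Ioc (0 : ℝ) 1,
    ENNReal.ofReal (c * r ^ d) ≤ μ (closedBall x r) ∧
      μ (closedBall x r) ≤ ENNReal.ofReal (C * r ^ d)

lemma measure_singleton_eq_zero_of_measure_closedBall_le (hd : 0 < d)
    (h : ∀ r ∈ Ioc (0 : ℝ) 1, μ (closedBall x r) ≤ ENNReal.ofReal (C * r ^ d)) : μ {x} = 0 := by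
  refine nonpos_iff_eq_zero.1 <| ge_of_tendsto
    (by simpa using ENNReal.tendsto_ofReal (tendsto_const_mul_rpow_nhdsGT_zero C hd)) ?_
  filter_upwards [Ioc_mem_nhdsGT one_pos] with r hr
  exact (measure_mono (singleton_subset_iff.2 (mem_closedBall_self hr.1.le))).trans (h r hr)

lemma le_measure_annulus (hC : 0 ≤ C) {ρ : ℝ} (hρ : 0 < ρ) (n : ℕ)
    (hlow : ENNReal.ofReal (c * (ρ ^ n) ^ d) ≤ μ (closedBall x (ρ ^ n)))
    (hup : μ (closedBall x (ρ ^ (n + 1))) ≤ ENNReal.ofReal (C * (ρ ^ (n + 1)) ^ d)) :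
    ENNReal.ofReal ((c - C * ρ ^ d) * (ρ ^ n) ^ d) ≤ μ (annulus x ρ n) := by
  have hsplit : C * (ρ ^ (n + 1)) ^ d = C * ρ ^ d * (ρ ^ n) ^ d := by
    rw [pow_succ', Real.mul_rpow hρ.le (pow_pos hρ n).le, mul_assoc]
  calc ENNReal.ofReal ((c - C * ρ ^ d) * (ρ ^ n) ^ d)
      ≤ ENNReal.ofReal (c * (ρ ^ n) ^ d) - ENNReal.ofReal (C * (ρ ^ (n + 1)) ^ d) := by
        rw [hsplit, sub_mul]
        exact (ENNReal.ofReal_sub _ (by positivity)).le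
    _ ≤ μ (closedBall x (ρ ^ n)) - μ (closedBall x (ρ ^ (n + 1))) := tsub_le_tsub hlow hup
    _ ≤ μ (annulus x ρ n) := annulus_eq_closedBall_diff x ρ n ▸ le_measure_sdiff

variable [OpensMeasurableSpace X] {β : ℝ}

lemma setLIntegral_annulus_dist_rpow_neg_le (hβ : 0 ≤ β) {ρ : ℝ} (hρ : 0 < ρ) (n : ℕ) :
    ∫⁻ y in annulus x ρ n, ENNReal.ofReal (dist x y ^ (-β)) ∂μ ≤
      ENNReal.ofReal ((ρ ^ (n + 1)) ^ (-β)) * μ (annulus x ρ n) :=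
  (setLIntegral_mono' (measurableSet_annulus x ρ n) fun _ hy => ENNReal.ofReal_le_ofReal <|
    Real.rpow_le_rpow_of_nonpos (pow_pos hρ _) hy.1.le (neg_nonpos.2 hβ)).trans_eq
    (setLIntegral_const _ _)

lemma le_setLIntegral_annulus_dist_rpow_neg (hβ : 0 ≤ β) {ρ : ℝ} (hρ : 0 < ρ) (n : ℕ) :
    ENNReal.ofReal ((ρ ^ n) ^ (-β)) * μ (annulus x ρ n) ≤
      ∫⁻ y in annulus x ρ n, ENNReal.ofReal (dist x y ^ (-β)) ∂μ :=
  (setLIntegral_const _ _).symm.trans_le <|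
    setLIntegral_mono' (measurableSet_annulus x ρ n) fun _ hy => ENNReal.ofReal_le_ofReal <|
      Real.rpow_le_rpow_of_nonpos ((pow_pos hρ _).trans hy.1) hy.2 (neg_nonpos.2 hβ)

theorem setLIntegral_closedBall_dist_rpow_neg_lt_top_iff (hd : 0 < d) (hc : 0 < c) (hC : 0 ≤ C)
    (hβ : 0 ≤ β) (hμ : IsAhlforsRegularAt μ x c C d) :
    ∫⁻ y in closedBall x 1, ENNReal.ofReal (dist x y ^ (-β)) ∂μ < ∞ ↔ β < d := by
  -- `ρ` is so small that the Ahlfors bounds leave every annulus a fixed fraction of its ball.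
  obtain ⟨ρ, hρc, hρ₀, hρ₁⟩ : ∃ ρ, C * ρ ^ d < c ∧ 0 < ρ ∧ ρ < 1 :=
    (((tendsto_const_mul_rpow_nhdsGT_zero C hd).eventually (gt_mem_nhds hc)).and
      (Ioo_mem_nhdsGT one_pos)).exists
  have hball : ∀ n, ρ ^ n ∈ Ioc (0 : ℝ) 1 := fun n => ⟨pow_pos hρ₀ n, pow_le_one₀ hρ₀.le hρ₁.le⟩
  have hμx : μ {x} = 0 :=
    measure_singleton_eq_zero_of_measure_closedBall_le hd fun r hr => (hμ r hr).2
  have hsum : ∫⁻ y in closedBall x 1, ENNReal.ofReal (dist x y ^ (-β)) ∂μ =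
      ∑' n, ∫⁻ y in annulus x ρ n, ENNReal.ofReal (dist x y ^ (-β)) ∂μ := by
    rw [← lintegral_iUnion (measurableSet_annulus x ρ) (pairwise_disjoint_annulus x hρ₀.le hρ₁.le),
      iUnion_annulus x hρ₀ hρ₁]
    exact setLIntegral_congr (sdiff_null_ae_eq_self hμx).symm
  have hgeom : ∀ n : ℕ, (ρ ^ n) ^ (-β) * (ρ ^ n) ^ d = (ρ ^ (d - β)) ^ n := fun n => by
    rw [← Real.rpow_add (pow_pos hρ₀ n), Real.rpow_pow_comm hρ₀.le, neg_add_eq_sub]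
  have hlow : ∀ n, ENNReal.ofReal (c - C * ρ ^ d) * ENNReal.ofReal (ρ ^ (d - β)) ^ n ≤
      ∫⁻ y in annulus x ρ n, ENNReal.ofReal (dist x y ^ (-β)) ∂μ := fun n => by
    refine le_trans (le_of_eq ?_) ((mul_le_mul_right (le_measure_annulus hC hρ₀ n
      (hμ _ (hball n)).1 (hμ _ (hball (n + 1))).2) _).trans
      (le_setLIntegral_annulus_dist_rpow_neg hβ hρ₀ n))
    rw [← ENNReal.ofReal_pow (by positivity), ← hgeom, ← ENNReal.ofReal_mul (by positivity),
      ← ENNReal.ofReal_mul (by positivity)]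
    ring_nf
  have hup : ∀ n, ∫⁻ y in annulus x ρ n, ENNReal.ofReal (dist x y ^ (-β)) ∂μ ≤
      ENNReal.ofReal (ρ ^ (-β) * C) * ENNReal.ofReal (ρ ^ (d - β)) ^ n := fun n => by
    refine (setLIntegral_annulus_dist_rpow_neg_le hβ hρ₀ n).trans <|
      (mul_le_mul_right ((measure_mono (annulus_subset_closedBall x ρ n)).trans
        (hμ _ (hball n)).2) _).trans (le_of_eq ?_)
    rw [← ENNReal.ofReal_pow (by positivity), ← hgeom, ← ENNReal.ofReal_mul (by positivity),
      ← ENNReal.ofReal_mul (by positivity), pow_succ',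
      Real.mul_rpow hρ₀.le (pow_pos hρ₀ n).le]
    ring_nf
  rw [hsum, ENNReal.tsum_lt_top_iff_of_le_mul_of_mul_le (by simpa using hρc) ENNReal.ofReal_ne_top
    hlow hup, tsum_geometric_lt_top, ENNReal.ofReal_lt_one, ← sub_pos]
  simpa using Real.rpow_lt_rpow_left_iff_of_base_lt_one hρ₀ hρ₁ (y := d - β) (z := 0)

theorem lintegral_dist_rpow_neg_lt_top_iff [IsFiniteMeasure μ] (hd : 0 < d) (hc : 0 < c)
    (hC : 0 ≤ C) (hβ : 0 ≤ β) (hμ : IsAhlforsRegularAt μ x c C d) :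
    ∫⁻ y, ENNReal.ofReal (dist x y ^ (-β)) ∂μ < ∞ ↔ β < d := by
  have hfar : ∫⁻ y in (closedBall x 1)ᶜ, ENNReal.ofReal (dist x y ^ (-β)) ∂μ < ∞ := by
    refine (setLIntegral_mono' measurableSet_closedBall.compl fun y hy => ?_).trans_lt
      ((setLIntegral_const _ 1).trans_lt (by simp [measure_lt_top]))
    have hy : 1 < dist x y := by simpa [dist_comm] using hy
    exact ENNReal.ofReal_le_one.2 (Real.rpow_le_one_of_one_le_of_nonpos hy.le (neg_nonpos.2 hβ))
  rw [← lintegral_add_compl _ measurableSet_closedBall, ENNReal.add_lt_top, and_iff_left hfar,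
    setLIntegral_closedBall_dist_rpow_neg_lt_top_iff hd hc hC hβ hμ]

theorem memLp_dist_rpow_neg_iff [IsFiniteMeasure μ] {t p : ℝ} (hd : 0 < d) (hc : 0 < c)
    (hC : 0 ≤ C) (ht : 0 ≤ t) (hp : 0 < p) (hμ : IsAhlforsRegularAt μ x c C d) :
    MemLp (fun y => dist x y ^ (-t)) (ENNReal.ofReal p) μ ↔ t * p < d := by
  have hmeas : Measurable fun y => dist x y ^ (-t) := by fun_prop
  rw [← lintegral_dist_rpow_neg_lt_top_iff hd hc hC (mul_nonneg ht hp.le) hμ, MemLp,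
    and_iff_right hmeas.aestronglyMeasurable,
    eLpNorm_lt_top_iff_lintegral_rpow_enorm_lt_top (by simpa using hp) ENNReal.ofReal_ne_top,
    ENNReal.toReal_ofReal hp.le]
  congr! 3 with y
  rw [Real.enorm_of_nonneg (by positivity), ENNReal.ofReal_rpow_of_nonneg (by positivity) hp.le,
    ← Real.rpow_mul dist_nonneg, neg_mul]

end AhlforsRegular

theorem riesz_kernel_memLp_iff_general
    {K : Type*} [MetricSpace K] [MeasurableSpace K] [BorelSpace K]
    (μ : Measure K) [IsProbabilityMeasure μ]
    (dh dw c C : ℝ) (hdh : 0 < dh) (hdw : 1 < dw) (hc : 0 < c) (hC : 0 < C)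
    (hAhl : ∀ (x : K) (r : ℝ), r ∈ Set.Ioc (0 : ℝ) 1 →
      ENNReal.ofReal (c * r ^ dh) ≤ μ (Metric.closedBall x r) ∧
        μ (Metric.closedBall x r) ≤ ENNReal.ofReal (C * r ^ dh))
    (G : K → K → ℝ) (hGmeas : Measurable (Function.uncurry G))
    (s C₁ C₂ C₃ : ℝ) (hs' : s < dh / dw)
    (hC₁ : 0 < C₁) (hC₂ : 0 < C₂) (hC₃ : 0 < C₃)
    (hGlower : ∀ x y : K, x ≠ y → C₁ * dist x y ^ (s * dw - dh) - C₂ ≤ G x y)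
    (hGupper : ∀ x y : K, x ≠ y → G x y ≤ C₃ * dist x y ^ (s * dw - dh))
    (p : ℝ) (hp : 0 < p) (x : K) :
    MemLp (fun y => G x y) (ENNReal.ofReal p) μ ↔ (p - 1) * dh / (p * dw) < s := by
  have hdw₀ : 0 < dw := one_pos.trans hdw
  set t := dh - s * dw
  have ht : 0 < t := sub_pos.2 ((lt_div_iff₀ hdw₀).1 hs')
  have hexp : s * dw - dh = -t := by ring
  have hcond : (p - 1) * dh / (p * dw) < s ↔ t * p < dh := by
    rw [div_lt_iff₀ (by positivity)]
    constructor <;> intro h <;> nlinarith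
  have hμx : μ {x} = 0 :=
    measure_singleton_eq_zero_of_measure_closedBall_le hdh fun r hr => (hAhl x r hr).2
  have hne : ∀ᵐ y ∂μ, x ≠ y := (measure_eq_zero_iff_ae_notMem.1 hμx).mono fun _ hy => Ne.symm hy
  rw [hcond, ← memLp_dist_rpow_neg_iff hdh hc hC.le ht.le hp (hAhl x)]
  exact memLp_iff_of_mul_sub_le_of_le_mul
    (hGmeas.comp measurable_prodMk_left).aestronglyMeasurable
    (by fun_prop : Measurable fun y => dist x y ^ (-t)).aestronglyMeasurable
    (ae_of_all _ fun y => by positivity) hC₁ hC₂.le hC₃.le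
    (hne.mono fun y hy => hexp ▸ hGlower x y hy) (hne.mono fun y hy => hexp ▸ hGupper x y hy)

/-- For a kernel `G` with the two-sided bound
`C₁ d(x,y)^{s d_w - d_h} − C₂ ≤ G(x,y) ≤ C₃ d(x,y)^{s d_w - d_h}` off the diagonal
(`0 < s < d_h/d_w`), for `p > 0` and `x ∈ K`, `y ↦ G(x,y)` belongs to `L^p(K,μ)` iff
`s > (p−1) d_h / (p d_w)`. -/
theorem riesz_kernel_memLp_iff
    {K : Type*} [MetricSpace K] [CompactSpace K] [MeasurableSpace K] [BorelSpace K]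
    (μ : Measure K) [IsProbabilityMeasure μ]
    (dh dw c C : ℝ) (hdh : 0 < dh) (hdw : 1 < dw) (hc : 0 < c) (hC : 0 < C)
    (hdiam : Metric.diam (Set.univ : Set K) ≤ 1)
    (hAhl : ∀ (x : K) (r : ℝ), r ∈ Set.Ioc (0 : ℝ) 1 →
      ENNReal.ofReal (c * r ^ dh) ≤ μ (Metric.closedBall x r) ∧
        μ (Metric.closedBall x r) ≤ ENNReal.ofReal (C * r ^ dh))
    (G : K → K → ℝ) (hGmeas : Measurable (Function.uncurry G))
    (s C₁ C₂ C₃ : ℝ) (hs : 0 < s) (hs' : s < dh / dw)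
    (hC₁ : 0 < C₁) (hC₂ : 0 < C₂) (hC₃ : 0 < C₃)
    (hGlower : ∀ x y : K, x ≠ y → C₁ * dist x y ^ (s * dw - dh) - C₂ ≤ G x y)
    (hGupper : ∀ x y : K, x ≠ y → G x y ≤ C₃ * dist x y ^ (s * dw - dh))
    (p : ℝ) (hp : 0 < p) (x : K) :
    MemLp (fun y => G x y) (ENNReal.ofReal p) μ ↔ (p - 1) * dh / (p * dw) < s :=
  riesz_kernel_memLp_iff_general μ dh dw c C hdh hdw hc hC hAhl G hGmeas s C₁ C₂ C₃ hs' hC₁ hC₂ hC₃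
    hGlower hGupper p hp x
end

section
/- Let p_t(x,y) be a symmetric jointly continuous heat kernel on a compact metric space K satisfying the sub-Gaussian lower bound p_t(x,y) ≥ c₁ t^{-d_h/d_w} exp(−c₂ (d(x,y)^{d_w}/t)^{1/(d_w−1)}) for all x,y ∈ K and t ∈ (0,1), with d_w > 1, and satisfying sup_{x,y} |p_t(x,y) − 1| ≤ C e^{−λ₁ t} for t ≥ 1 with λ₁ > 0. Define for s ∈ (0, d_h/d_w) the kernel G_s(x,y) = (1/Γ(s)) ∫_0^∞ t^{s−1}(p_t(x,y) − 1) dt for x ≠ y. Then there exist positive constants C₁, C₂ such that G_s(x,y) ≥ C₁ d(x,y)^{s d_w − d_h} − C₂ for all x ≠ y in K. -/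
/-!
Split `∫₀^∞ t^(s-1) (p_t(x,y) - 1) dt` at `t = 1`. On `[1, ∞)` the exponential convergence of
`p_t` to `1` bounds the integral below by a constant. On `(0, 1)` the `-1` contributes `-1/s`,
and since `p_t ≥ 0` there, the rest is at least the contribution of the window `a/2 < t < a`,
`a = d(x,y)^d_w`. In that window `d(x,y)^d_w / t < 2`, so the sub-Gaussian factor is bounded
below by a constant and `t^(s-1) p_t(x,y) ≳ t^(s-1-d_h/d_w) ≥ a^(s-1-d_h/d_w)`, the exponent being
negative as `s < d_h/d_w`. The window has length `a/2`, which gives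
`a^(s-d_h/d_w) = d(x,y)^(s d_w - d_h)`.
-/

open MeasureTheory Metric Set Real

lemma integrableOn_Ioo_zero_one_rpow_sub_one {s : ℝ} (hs : 0 < s) :
    IntegrableOn (fun t : ℝ => t ^ (s - 1)) (Ioo 0 1) :=
  ((intervalIntegrable_iff_integrableOn_Ioc_of_le zero_le_one).mp
    (intervalIntegral.intervalIntegrable_rpow' (by linarith))).mono_set Ioo_subset_Ioc_self

lemma integral_Ioo_zero_one_rpow_sub_one {s : ℝ} (hs : 0 < s) :
    ∫ t in Ioo (0 : ℝ) 1, t ^ (s - 1) = 1 / s := by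
  rw [← integral_Ioc_eq_integral_Ioo, ← intervalIntegral.integral_of_le zero_le_one,
    integral_rpow (Or.inl (by linarith)), one_rpow, zero_rpow (by linarith), sub_add_cancel]
  ring

lemma integrableOn_Ici_one_rpow_mul_exp_neg_mul {s b : ℝ} (hs : 0 < s) (hb : 0 < b) :
    IntegrableOn (fun t : ℝ => t ^ (s - 1) * exp (-b * t)) (Ici 1) := by
  have h := integrableOn_rpow_mul_exp_neg_mul_rpow (p := 1) (s := s - 1) (by linarith) one_pos hb
  simp only [rpow_one] at h
  exact h.mono_set fun t ht => mem_Ioi.2 (zero_lt_one.trans_le ht)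

lemma integrableOn_Ioo_zero_one_rpow_mul {g : ℝ → ℝ} {s : ℝ} (hs : 0 < s)
    (hint : IntegrableOn (fun t => t ^ (s - 1) * (g t - 1)) (Ioi 0)) :
    IntegrableOn (fun t => t ^ (s - 1) * g t) (Ioo 0 1) :=
  ((hint.mono_set Ioo_subset_Ioi_self).add (integrableOn_Ioo_zero_one_rpow_sub_one hs)).congr_fun
    (fun t _ => by simp only [Pi.add_apply]; ring) measurableSet_Ioo

lemma integral_Ioi_rpow_mul_sub_one_eq {g : ℝ → ℝ} {s : ℝ} (hs : 0 < s)
    (hint : IntegrableOn (fun t => t ^ (s - 1) * (g t - 1)) (Ioi 0)) :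
    ∫ t in Ioi (0 : ℝ), t ^ (s - 1) * (g t - 1) =
      (∫ t in Ioo (0 : ℝ) 1, t ^ (s - 1) * g t) - 1 / s +
        ∫ t in Ici (1 : ℝ), t ^ (s - 1) * (g t - 1) := by
  rw [← Ioo_union_Ici_eq_Ioi zero_lt_one, ← integral_Ioo_zero_one_rpow_sub_one hs,
    ← integral_sub (integrableOn_Ioo_zero_one_rpow_mul hs hint)
      (integrableOn_Ioo_zero_one_rpow_sub_one hs),
    setIntegral_union ((Iio_disjoint_Ici le_rfl).mono_left Ioo_subset_Iio_self) measurableSet_Ici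
      (hint.mono_set Ioo_subset_Ioi_self) (hint.mono_set (Ici_subset_Ioi.2 zero_lt_one))]
  congr 1
  exact setIntegral_congr_fun measurableSet_Ioo fun t _ => by ring

lemma mul_sub_le_setIntegral_Ioo_zero_one {q : ℝ → ℝ} {u v m : ℝ} (hu : 0 ≤ u) (huv : u ≤ v)
    (hv : v ≤ 1) (hq : IntegrableOn q (Ioo 0 1)) (hq0 : ∀ t ∈ Ioo (0 : ℝ) 1, 0 ≤ q t)
    (hm : ∀ t ∈ Ioo u v, m ≤ q t) :
    m * (v - u) ≤ ∫ t in Ioo (0 : ℝ) 1, q t := by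
  have hsub : Ioo u v ⊆ Ioo 0 1 := Ioo_subset_Ioo hu hv
  calc m * (v - u) = m * volume.real (Ioo u v) := by rw [Real.volume_real_Ioo_of_le huv]
    _ ≤ ∫ t in Ioo u v, q t :=
      setIntegral_ge_of_const_le_real measurableSet_Ioo measure_Ioo_lt_top.ne hm
        (hq.mono_set hsub)
    _ ≤ ∫ t in Ioo 0 1, q t :=
      setIntegral_mono_set hq (ae_restrict_of_forall_mem measurableSet_Ioo hq0)
        hsub.eventuallyLE

lemma neg_mul_integral_le_setIntegral_Ici_one {g : ℝ → ℝ} {s C b : ℝ} (hs : 0 < s) (hb : 0 < b)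
    (hg : ∀ t, 1 ≤ t → |g t - 1| ≤ C * exp (-b * t))
    (hint : IntegrableOn (fun t => t ^ (s - 1) * (g t - 1)) (Ici 1)) :
    -(C * ∫ t in Ici (1 : ℝ), t ^ (s - 1) * exp (-b * t)) ≤
      ∫ t in Ici (1 : ℝ), t ^ (s - 1) * (g t - 1) := by
  rw [← integral_const_mul, ← integral_neg]
  refine setIntegral_mono_on ((integrableOn_Ici_one_rpow_mul_exp_neg_mul hs hb).const_mul C).neg
    hint measurableSet_Ici fun t ht => ?_
  have hg_low := (abs_le.mp (hg t ht)).1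
  have ht_pow : 0 ≤ t ^ (s - 1) := rpow_nonneg (zero_le_one.trans ht) _
  nlinarith

lemma le_integral_Ioi_rpow_mul_sub_one {g : ℝ → ℝ} {s C b a m : ℝ} (hs : 0 < s) (hb : 0 < b)
    (ha : 0 < a) (ha1 : a ≤ 1)
    (hint : IntegrableOn (fun t => t ^ (s - 1) * (g t - 1)) (Ioi 0))
    (hg0 : ∀ t ∈ Ioo (0 : ℝ) 1, 0 ≤ g t) (hwindow : ∀ t ∈ Ioo (a / 2) a, m ≤ t ^ (s - 1) * g t)
    (hg1 : ∀ t, 1 ≤ t → |g t - 1| ≤ C * exp (-b * t)) :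
    m * (a / 2) - 1 / s - C * ∫ t in Ici (1 : ℝ), t ^ (s - 1) * exp (-b * t) ≤
      ∫ t in Ioi (0 : ℝ), t ^ (s - 1) * (g t - 1) := by
  have hshort := mul_sub_le_setIntegral_Ioo_zero_one (by positivity) (by linarith) ha1
    (integrableOn_Ioo_zero_one_rpow_mul hs hint)
    (fun t ht => mul_nonneg (rpow_nonneg ht.1.le _) (hg0 t ht)) hwindow
  have hlong := neg_mul_integral_le_setIntegral_Ici_one hs hb hg1
    (hint.mono_set (Ici_subset_Ioi.2 zero_lt_one))
  rw [integral_Ioi_rpow_mul_sub_one_eq hs hint]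
  linarith

lemma le_rpow_mul_of_subGaussian_lower_bound {P : ℝ → ℝ} {r dh dw s c₁ c₂ : ℝ} (hr : 0 ≤ r)
    (hdw : 1 < dw) (hs : s < dh / dw) (hc₁ : 0 ≤ c₁) (hc₂ : 0 ≤ c₂) (hr1 : r ^ dw ≤ 1)
    (hP : ∀ t ∈ Ioo (0 : ℝ) 1,
      c₁ * t ^ (-(dh / dw)) * exp (-c₂ * (r ^ dw / t) ^ (1 / (dw - 1))) ≤ P t) :
    ∀ t ∈ Ioo (r ^ dw / 2) (r ^ dw),
      c₁ * exp (-c₂ * 2 ^ (1 / (dw - 1))) * (r ^ dw) ^ (s - 1 - dh / dw) ≤ t ^ (s - 1) * P t := by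
  rintro t ⟨ht_low, ht_up⟩
  have ht : 0 < t := lt_of_le_of_lt (by positivity) ht_low
  have hratio : r ^ dw / t ≤ 2 := by rw [div_le_iff₀ ht]; linarith
  have hγ : 0 ≤ 1 / (dw - 1) := one_div_nonneg.2 (by linarith)
  have hexp : exp (-c₂ * 2 ^ (1 / (dw - 1))) ≤ exp (-c₂ * (r ^ dw / t) ^ (1 / (dw - 1))) := by
    rw [neg_mul, neg_mul, exp_le_exp, neg_le_neg_iff]
    gcongr
  have hpow : (r ^ dw) ^ (s - 1 - dh / dw) ≤ t ^ (s - 1 - dh / dw) :=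
    rpow_le_rpow_of_nonpos ht ht_up.le (by linarith)
  calc c₁ * exp (-c₂ * 2 ^ (1 / (dw - 1))) * (r ^ dw) ^ (s - 1 - dh / dw)
      ≤ c₁ * exp (-c₂ * (r ^ dw / t) ^ (1 / (dw - 1))) * t ^ (s - 1 - dh / dw) := by gcongr
    _ = t ^ (s - 1) * (c₁ * t ^ (-(dh / dw)) * exp (-c₂ * (r ^ dw / t) ^ (1 / (dw - 1)))) := by
      rw [sub_eq_add_neg (s - 1), rpow_add ht]; ring
    _ ≤ t ^ (s - 1) * P t := by gcongr; exact hP t ⟨ht, ht_up.trans_le hr1⟩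

theorem riesz_kernel_lower_bound_general
    {K : Type*} [MetricSpace K] [CompactSpace K]
    (dh dw : ℝ) (hdw : 1 < dw)
    (hdiam : Metric.diam (Set.univ : Set K) ≤ 1)
    (p : ℝ → K → K → ℝ)
    (c₁ c₂ C lam₁ : ℝ) (hc₁ : 0 < c₁) (hc₂ : 0 < c₂) (hC : 0 < C) (hlam₁ : 0 < lam₁)
    (hlow : ∀ (t : ℝ), t ∈ Set.Ioo (0 : ℝ) 1 → ∀ x y : K,
      c₁ * t ^ (-(dh / dw)) * Real.exp (-c₂ * (dist x y ^ dw / t) ^ (1 / (dw - 1)))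
        ≤ p t x y)
    (hlarge : ∀ (t : ℝ), 1 ≤ t → ∀ x y : K, |p t x y - 1| ≤ C * Real.exp (-lam₁ * t))
    (s : ℝ) (hs : 0 < s) (hs' : s < dh / dw)
    (hint : ∀ x y : K, x ≠ y →
      IntegrableOn (fun t : ℝ => t ^ (s - 1) * (p t x y - 1)) (Set.Ioi 0))
    (G : K → K → ℝ)
    (hG : ∀ x y : K, x ≠ y →
      G x y = (1 / Real.Gamma s) * ∫ t in Set.Ioi (0 : ℝ), t ^ (s - 1) * (p t x y - 1)) :
    ∃ C₁ C₂ : ℝ, 0 < C₁ ∧ 0 < C₂ ∧ ∀ x y : K, x ≠ y →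
      C₁ * dist x y ^ (s * dw - dh) - C₂ ≤ G x y := by
  set e₀ := exp (-c₂ * 2 ^ (1 / (dw - 1)))
  set E := ∫ t in Ici (1 : ℝ), t ^ (s - 1) * exp (-lam₁ * t)
  have hE : 0 ≤ E := setIntegral_nonneg measurableSet_Ici fun t ht => by
    have : (0 : ℝ) ≤ t := zero_le_one.trans ht
    positivity
  have hΓ : 0 < Gamma s := Gamma_pos_of_pos hs
  refine ⟨c₁ * e₀ / 2 / Gamma s, (1 / s + C * E) / Gamma s, by positivity, by positivity,
    fun x y hxy => ?_⟩
  have hr : 0 < dist x y := dist_pos.2 hxy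
  have hr1 : dist x y ^ dw ≤ 1 := rpow_le_one hr.le
    ((dist_le_diam_of_mem isCompact_univ.isBounded (mem_univ x) (mem_univ y)).trans hdiam)
    (by linarith)
  have key := le_integral_Ioi_rpow_mul_sub_one hs hlam₁ (by positivity) hr1 (hint x y hxy)
    (fun t ht => le_trans (by have := ht.1; positivity) (hlow t ht x y))
    (le_rpow_mul_of_subGaussian_lower_bound hr.le hdw hs' hc₁.le hc₂.le hr1
      fun t ht => hlow t ht x y)
    fun t ht => hlarge t ht x y
  have hpow : (dist x y ^ dw) ^ (s - 1 - dh / dw) * dist x y ^ dw = dist x y ^ (s * dw - dh) := by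
    rw [← rpow_add_one (by positivity), ← rpow_mul hr.le]
    congr 1
    field_simp
    ring
  rw [hG x y hxy]
  calc c₁ * e₀ / 2 / Gamma s * dist x y ^ (s * dw - dh) - (1 / s + C * E) / Gamma s
      = (c₁ * e₀ * (dist x y ^ dw) ^ (s - 1 - dh / dw) * (dist x y ^ dw / 2) - 1 / s - C * E)
          / Gamma s := by rw [← hpow]; ring
    _ ≤ (∫ t in Ioi (0 : ℝ), t ^ (s - 1) * (p t x y - 1)) / Gamma s := by gcongr
    _ = _ := by ring

/-- If the heat kernel satisfies the sub-Gaussian lower bound on `(0,1)` and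
exponential closeness to `1` for `t ≥ 1`, then for `s ∈ (0, d_h/d_w)` the Riesz kernel
`G_s(x,y) = (1/Γ(s)) ∫_0^∞ t^{s−1}(p_t(x,y) − 1) dt` satisfies
`G_s(x,y) ≥ C₁ d(x,y)^{s d_w − d_h} − C₂` for all `x ≠ y`. -/
theorem riesz_kernel_lower_bound
    {K : Type*} [MetricSpace K] [CompactSpace K]
    (dh dw : ℝ) (hdh : 0 < dh) (hdw : 1 < dw)
    (hdiam : Metric.diam (Set.univ : Set K) ≤ 1)
    (p : ℝ → K → K → ℝ)
    (c₁ c₂ C lam₁ : ℝ) (hc₁ : 0 < c₁) (hc₂ : 0 < c₂) (hC : 0 < C) (hlam₁ : 0 < lam₁)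
    (hlow : ∀ (t : ℝ), t ∈ Set.Ioo (0 : ℝ) 1 → ∀ x y : K,
      c₁ * t ^ (-(dh / dw)) * Real.exp (-c₂ * (dist x y ^ dw / t) ^ (1 / (dw - 1)))
        ≤ p t x y)
    (hlarge : ∀ (t : ℝ), 1 ≤ t → ∀ x y : K, |p t x y - 1| ≤ C * Real.exp (-lam₁ * t))
    (s : ℝ) (hs : 0 < s) (hs' : s < dh / dw)
    (hint : ∀ x y : K, x ≠ y →
      IntegrableOn (fun t : ℝ => t ^ (s - 1) * (p t x y - 1)) (Set.Ioi 0))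
    (G : K → K → ℝ)
    (hG : ∀ x y : K, x ≠ y →
      G x y = (1 / Real.Gamma s) * ∫ t in Set.Ioi (0 : ℝ), t ^ (s - 1) * (p t x y - 1)) :
    ∃ C₁ C₂ : ℝ, 0 < C₁ ∧ 0 < C₂ ∧ ∀ x y : K, x ≠ y →
      C₁ * dist x y ^ (s * dw - dh) - C₂ ≤ G x y :=
  riesz_kernel_lower_bound_general dh dw hdw hdiam p c₁ c₂ C lam₁ hc₁ hc₂ hC hlam₁ hlow hlarge s hs
    hs' hint G hG
end

section
/- Under the same hypotheses on the heat kernel p_t as in the lower-bound setting (sub-Gaussian lower bound for t ∈ (0,1), exponential decay of p_t − 1 for t ≥ 1), for s = d_h/d_w the kernel G_s(x,y) = (1/Γ(s)) ∫_0^∞ t^{s−1}(p_t(x,y) − 1) dt satisfies G_s(x,y) ≥ −C₁ ln d(x,y) − C₂ for all x ≠ y in K, for some positive constants C₁, C₂. -/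
open MeasureTheory Metric Set Real

lemma integrableOn_rpow_sub_one {s : ℝ} (hs : 0 < s) {A : Set ℝ} (hA : A ⊆ Ioo 0 1) :
    IntegrableOn (fun t : ℝ => t ^ (s - 1)) A :=
  (intervalIntegral.intervalIntegrable_rpow' (by linarith)).1.mono_set
    (hA.trans Ioo_subset_Ioc_self)

lemma setIntegral_rpow_sub_one_le {s : ℝ} (hs : 0 < s) {A : Set ℝ} (hA : A ⊆ Ioo 0 1) :
    ∫ t in A, t ^ (s - 1) ≤ 1 / s := by
  rw [← integral_Ioo_zero_one_rpow_sub_one hs]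
  refine setIntegral_mono_set (integrableOn_rpow_sub_one hs subset_rfl) ?_
    (Filter.Eventually.of_forall hA)
  filter_upwards [self_mem_ae_restrict measurableSet_Ioo] with t ht
  exact (rpow_pos_of_pos ht.1 _).le

lemma integral_Ico_inv {a b : ℝ} (ha : 0 < a) (hab : a ≤ b) :
    ∫ t in Ico a b, t⁻¹ = log (b / a) := by
  rw [integral_Ico_eq_integral_Ioo, ← integral_Ioc_eq_integral_Ioo,
    ← intervalIntegral.integral_of_le hab, integral_inv]
  exact fun h => ha.not_ge (uIcc_of_le hab ▸ h).1

lemma exp_neg_le_exp_neg_mul_rpow {c x e : ℝ} (hc : 0 ≤ c) (hx₀ : 0 ≤ x) (hx₁ : x ≤ 1)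
    (he : 0 ≤ e) : exp (-c) ≤ exp (-c * x ^ e) := by
  have : x ^ e ≤ 1 := rpow_le_one hx₀ hx₁ he
  gcongr
  nlinarith

section RieszIntegrand

variable {s : ℝ} {q : ℝ → ℝ}

lemma neg_one_div_le_setIntegral_rpow_mul_sub_one (hs : 0 < s) {A : Set ℝ} (hA : A ⊆ Ioo 0 1)
    (hAm : MeasurableSet A) (hq : ∀ t ∈ A, 0 ≤ q t)
    (hint : IntegrableOn (fun t => t ^ (s - 1) * (q t - 1)) A) :
    -(1 / s) ≤ ∫ t in A, t ^ (s - 1) * (q t - 1) := by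
  calc -(1 / s) ≤ -∫ t in A, t ^ (s - 1) := neg_le_neg (setIntegral_rpow_sub_one_le hs hA)
    _ = ∫ t in A, -t ^ (s - 1) := (integral_neg _).symm
    _ ≤ ∫ t in A, t ^ (s - 1) * (q t - 1) := by
      refine setIntegral_mono_on (integrableOn_rpow_sub_one hs hA).neg hint hAm fun t ht => ?_
      have := rpow_nonneg (hA ht).1.le (s - 1)
      nlinarith [hq t ht]

lemma mul_neg_log_sub_one_div_le_setIntegral_rpow_mul_sub_one (hs : 0 < s) {u a : ℝ} (hu : 0 < u)
    (hu₁ : u ≤ 1) (hq : ∀ t ∈ Ico u 1, a * t ^ (-s) ≤ q t)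
    (hint : IntegrableOn (fun t => t ^ (s - 1) * (q t - 1)) (Ico u 1)) :
    a * -log u - 1 / s ≤ ∫ t in Ico u 1, t ^ (s - 1) * (q t - 1) := by
  have hcont : ContinuousOn (fun t : ℝ => t⁻¹) (Icc u 1) :=
    continuousOn_inv₀.mono fun t ht => (hu.trans_le ht.1).ne'
  have hinv : IntegrableOn (fun t : ℝ => t⁻¹) (Ico u 1) :=
    hcont.integrableOn_Icc.mono_set Ico_subset_Icc_self
  have hsub : Ico u 1 ⊆ Ioo 0 1 := fun t ht => ⟨hu.trans_le ht.1, ht.2⟩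
  have hrpow := integrableOn_rpow_sub_one hs hsub
  calc a * -log u - 1 / s ≤ a * -log u - ∫ t in Ico u 1, t ^ (s - 1) := by
        linarith [setIntegral_rpow_sub_one_le hs hsub]
    _ = ∫ t in Ico u 1, (a * t⁻¹ - t ^ (s - 1)) := by
        rw [integral_sub (hinv.const_mul a) hrpow, integral_const_mul, integral_Ico_inv hu hu₁,
          one_div, log_inv]
    _ ≤ ∫ t in Ico u 1, t ^ (s - 1) * (q t - 1) := by
        refine setIntegral_mono_on ((hinv.const_mul a).sub hrpow) hint measurableSet_Ico
          fun t ht => ?_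
        have ht₀ : 0 < t := hu.trans_le ht.1
        have hinv_eq : a * t⁻¹ = t ^ (s - 1) * (a * t ^ (-s)) := by
          rw [mul_left_comm, ← rpow_add ht₀, show s - 1 + -s = -1 by ring, rpow_neg_one]
        rw [hinv_eq, ← mul_sub_one]
        exact mul_le_mul_of_nonneg_left (by linarith [hq t ht]) (rpow_nonneg ht₀.le _)

lemma neg_mul_rpow_mul_Gamma_le_setIntegral_rpow_mul_sub_one (hs : 0 < s) {C lam : ℝ}
    (hlam : 0 < lam)
    (hq : ∀ t, 1 ≤ t → |q t - 1| ≤ C * exp (-lam * t))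
    (hint : IntegrableOn (fun t => t ^ (s - 1) * (q t - 1)) (Ici 1)) :
    -(C * ((1 / lam) ^ s * Gamma s)) ≤ ∫ t in Ici 1, t ^ (s - 1) * (q t - 1) := by
  have hC : 0 ≤ C := nonneg_of_mul_nonneg_left ((abs_nonneg _).trans (hq 1 le_rfl)) (exp_pos _)
  have hgamma : IntegrableOn (fun t : ℝ => t ^ (s - 1) * exp (-(lam * t))) (Ioi 0) := by
    simpa only [rpow_one, neg_mul] using
      integrableOn_rpow_mul_exp_neg_mul_rpow (p := 1) (by linarith) one_pos hlam
  have hsub : Ici (1 : ℝ) ⊆ Ioi 0 := Ici_subset_Ioi.2 one_pos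
  have htail : ∫ t in Ici 1, t ^ (s - 1) * exp (-(lam * t)) ≤ (1 / lam) ^ s * Gamma s := by
    rw [← integral_rpow_mul_exp_neg_mul_Ioi hs hlam]
    refine setIntegral_mono_set hgamma ?_ (Filter.Eventually.of_forall hsub)
    filter_upwards [self_mem_ae_restrict measurableSet_Ioi] with t ht
    exact mul_nonneg (rpow_nonneg (le_of_lt ht) _) (exp_pos _).le
  calc -(C * ((1 / lam) ^ s * Gamma s))
      ≤ -(C * ∫ t in Ici 1, t ^ (s - 1) * exp (-(lam * t))) := by gcongr
    _ = ∫ t in Ici 1, -(C * (t ^ (s - 1) * exp (-(lam * t)))) := by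
        rw [integral_neg, integral_const_mul]
    _ ≤ ∫ t in Ici 1, t ^ (s - 1) * (q t - 1) := by
        refine setIntegral_mono_on ((hgamma.mono_set hsub).const_mul C).neg hint
          measurableSet_Ici fun t ht => ?_
        have hdecay : -(C * exp (-(lam * t))) ≤ q t - 1 := by
          have hqt := hq t ht
          rw [neg_mul] at hqt
          linarith [neg_abs_le (q t - 1)]
        have := mul_le_mul_of_nonneg_left hdecay (rpow_nonneg (zero_le_one.trans ht) (s - 1))
        linarith

lemma le_integral_rpow_mul_sub_one (hs : 0 < s) {u a C lam : ℝ} (hu : 0 < u) (hu₁ : u ≤ 1)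
    (hlam : 0 < lam) (hq₀ : ∀ t ∈ Ioo 0 u, 0 ≤ q t) (hq : ∀ t ∈ Ico u 1, a * t ^ (-s) ≤ q t)
    (hq₁ : ∀ t, 1 ≤ t → |q t - 1| ≤ C * exp (-lam * t))
    (hint : IntegrableOn (fun t => t ^ (s - 1) * (q t - 1)) (Ioi 0)) :
    a * -log u - (2 / s + C * ((1 / lam) ^ s * Gamma s))
      ≤ ∫ t in Ioi 0, t ^ (s - 1) * (q t - 1) := by
  have hsmall : Ioo 0 u ⊆ Ioo (0 : ℝ) 1 := Ioo_subset_Ioo_right hu₁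
  have hmiddle : Ico u 1 ⊆ Ioo (0 : ℝ) 1 := fun t ht => ⟨hu.trans_le ht.1, ht.2⟩
  have hunit : IntegrableOn (fun t => t ^ (s - 1) * (q t - 1)) (Ioo 0 1) :=
    hint.mono_set Ioo_subset_Ioi_self
  rw [← Ioo_union_Ici_eq_Ioi one_pos,
    setIntegral_union ((Iio_disjoint_Ici le_rfl).mono_left Ioo_subset_Iio_self) measurableSet_Ici
      hunit (hint.mono_set (Ici_subset_Ioi.2 one_pos)),
    ← Ioo_union_Ico_eq_Ioo hu hu₁,
    setIntegral_union ((Iio_disjoint_Ici le_rfl).mono Ioo_subset_Iio_self Ico_subset_Ici_self)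
      measurableSet_Ico (hunit.mono_set hsmall) (hunit.mono_set hmiddle)]
  have h₁ := neg_one_div_le_setIntegral_rpow_mul_sub_one hs hsmall measurableSet_Ioo hq₀
    (hunit.mono_set hsmall)
  have h₂ := mul_neg_log_sub_one_div_le_setIntegral_rpow_mul_sub_one hs hu hu₁ hq
    (hunit.mono_set hmiddle)
  have h₃ := neg_mul_rpow_mul_Gamma_le_setIntegral_rpow_mul_sub_one hs hlam hq₁
    (hint.mono_set (Ici_subset_Ioi.2 one_pos))
  linarith [show 2 / s = 1 / s + 1 / s by ring]

end RieszIntegrand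

/-- Under the same heat-kernel hypotheses as for the lower bound, for
`s = d_h/d_w` the Riesz kernel satisfies `G_s(x,y) ≥ −C₁ ln d(x,y) − C₂` for all `x ≠ y`. -/
theorem riesz_kernel_log_lower_bound
    {K : Type*} [MetricSpace K] [CompactSpace K]
    (dh dw : ℝ) (hdh : 0 < dh) (hdw : 1 < dw)
    (hdiam : Metric.diam (Set.univ : Set K) ≤ 1)
    (p : ℝ → K → K → ℝ)
    (c₁ c₂ C lam₁ : ℝ) (hc₁ : 0 < c₁) (hc₂ : 0 < c₂) (hC : 0 < C) (hlam₁ : 0 < lam₁)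
    (hlow : ∀ (t : ℝ), t ∈ Set.Ioo (0 : ℝ) 1 → ∀ x y : K,
      c₁ * t ^ (-(dh / dw)) * Real.exp (-c₂ * (dist x y ^ dw / t) ^ (1 / (dw - 1)))
        ≤ p t x y)
    (hlarge : ∀ (t : ℝ), 1 ≤ t → ∀ x y : K, |p t x y - 1| ≤ C * Real.exp (-lam₁ * t))
    (s : ℝ) (hs : s = dh / dw)
    (hint : ∀ x y : K, x ≠ y →
      IntegrableOn (fun t : ℝ => t ^ (s - 1) * (p t x y - 1)) (Set.Ioi 0))
    (G : K → K → ℝ)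
    (hG : ∀ x y : K, x ≠ y →
      G x y = (1 / Real.Gamma s) * ∫ t in Set.Ioi (0 : ℝ), t ^ (s - 1) * (p t x y - 1)) :
    ∃ C₁ C₂ : ℝ, 0 < C₁ ∧ 0 < C₂ ∧ ∀ x y : K, x ≠ y →
      -C₁ * Real.log (dist x y) - C₂ ≤ G x y := by
  have hs₀ : 0 < s := hs ▸ div_pos hdh (zero_lt_one.trans hdw)
  refine ⟨c₁ * exp (-c₂) * dw / Gamma s, (2 / s + C * ((1 / lam₁) ^ s * Gamma s)) / Gamma s,
    by positivity, by positivity, fun x y hxy => ?_⟩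
  have hr : 0 < dist x y := dist_pos.2 hxy
  have hr₁ : dist x y ≤ 1 :=
    (dist_le_diam_of_mem isCompact_univ.isBounded (mem_univ x) (mem_univ y)).trans hdiam
  have hu : 0 < dist x y ^ dw := rpow_pos_of_pos hr dw
  have hu₁ : dist x y ^ dw ≤ 1 := rpow_le_one hr.le hr₁ (by linarith)
  have hq₀ : ∀ t ∈ Ioo 0 (dist x y ^ dw), 0 ≤ p t x y := fun t ht =>
    le_trans (by have := ht.1; positivity) (hlow t ⟨ht.1, ht.2.trans_le hu₁⟩ x y)
  have hq : ∀ t ∈ Ico (dist x y ^ dw) 1, c₁ * exp (-c₂) * t ^ (-s) ≤ p t x y := fun t ht => by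
    have ht₀ : 0 < t := hu.trans_le ht.1
    refine le_trans ?_ (hlow t ⟨ht₀, ht.2⟩ x y)
    rw [← hs, mul_right_comm]
    refine mul_le_mul_of_nonneg_left ?_ (by positivity)
    exact exp_neg_le_exp_neg_mul_rpow hc₂.le (by positivity) ((div_le_one ht₀).2 ht.1)
      (one_div_nonneg.2 (by linarith))
  have hI := le_integral_rpow_mul_sub_one hs₀ hu hu₁ hlam₁ hq₀ hq (fun t ht => hlarge t ht x y)
    (hint x y hxy)
  rw [log_rpow hr] at hI
  rw [hG x y hxy]
  calc -(c₁ * exp (-c₂) * dw / Gamma s) * log (dist x y)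
        - (2 / s + C * ((1 / lam₁) ^ s * Gamma s)) / Gamma s
      = 1 / Gamma s * (c₁ * exp (-c₂) * -(dw * log (dist x y))
          - (2 / s + C * ((1 / lam₁) ^ s * Gamma s))) := by ring
    _ ≤ _ := by gcongr
end

section
/- Let η > 0, β ∈ {0,1}, and let h₀ ∈ (0, 1/e] be such that p(h) = h^η (−ln h)^β is increasing on (0, h₀] (extended by p(0)=0). Then there exists a constant c > 0 such that for all r ∈ (0, h₀], the Stieltjes integral ∫_0^r √(|ln u|) dp(u) ≤ c · r^η (−ln r)^{β + 1/2}. -/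
/-!
Cut `(0, r]` into the pieces `(r e^{-(k+1)}, r e^{-k}]` and put `L = -log r ≥ 1`. On the `k`-th
piece `√|log u| ≤ √(L + k + 1) ≤ √L (k + 2)`, and its `dp`-mass is at most
`p (r e^{-k}) = r^η e^{-ηk} (L + k)^β ≤ r^η L^β (k + 1)^⌈β⌉ e^{-ηk}`. The factor `e^{-ηk}` beats
the polynomial growth in `k`, so summing gives the bound with `c = ∑ₖ (k + 2)^(⌈β⌉+1) e^{-ηk}`.
-/

open MeasureTheory Set Real

noncomputable def logPower (η β h : ℝ) : ℝ := h ^ η * (-log h) ^ β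

lemma logPower_nonneg (η β : ℝ) {h : ℝ} (h0 : 0 ≤ h) (h1 : h ≤ 1) : 0 ≤ logPower η β h :=
  mul_nonneg (rpow_nonneg h0 η) (rpow_nonneg (neg_nonneg.2 (log_nonpos h0 h1)) β)

lemma mul_exp_neg_le {r x : ℝ} (hr : 0 ≤ r) (hx : 0 ≤ x) : r * exp (-x) ≤ r :=
  mul_le_of_le_one_right hr (exp_le_one_iff.2 (neg_nonpos.2 hx))

lemma rpow_add_le_rpow_mul_pow_natCeil (β : ℝ) {L x : ℝ} (hL : 1 ≤ L) (hx : 0 ≤ x) :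
    (L + x) ^ β ≤ L ^ β * (x + 1) ^ ⌈β⌉₊ := by
  rcases le_or_gt 0 β with hβ | hβ
  · calc (L + x) ^ β ≤ (L * (x + 1)) ^ β := by gcongr; nlinarith
      _ = L ^ β * (x + 1) ^ β := mul_rpow (by linarith) (by linarith)
      _ ≤ L ^ β * (x + 1) ^ ⌈β⌉₊ := by
        rw [← rpow_natCast]
        gcongr
        · linarith
        · exact Nat.le_ceil β
  · rw [Nat.ceil_eq_zero.2 hβ.le, pow_zero, mul_one]
    exact rpow_le_rpow_of_nonpos (by linarith) (by linarith) hβ.le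

lemma sqrt_add_le_sqrt_mul_add_one {L x : ℝ} (hL : 1 ≤ L) (hx : 0 ≤ x) :
    √(L + x) ≤ √L * (x + 1) := by
  rw [sqrt_le_iff, mul_pow, sq_sqrt (by linarith)]
  exact ⟨by positivity,
    by nlinarith [mul_le_mul_of_nonneg_right hL (by positivity : 0 ≤ x ^ 2 + 2 * x)]⟩

lemma summable_add_pow_mul_exp_neg_mul (N m : ℕ) {η : ℝ} (hη : 0 < η) :
    Summable fun k : ℕ => ((k : ℝ) + m) ^ N * exp (-η * k) := by
  have := ((summable_nat_add_iff m).2 (summable_pow_mul_exp_neg_nat_mul N hη)).mul_left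
    (exp (η * m))
  refine this.congr fun k => ?_
  rw [mul_left_comm, ← exp_add]
  push_cast
  ring_nf

lemma Ioc_zero_subset_iUnion_Ioc_mul_exp {r : ℝ} (hr : 0 < r) :
    Ioc 0 r ⊆ ⋃ k : ℕ, Ioc (r * exp (-(k + 1))) (r * exp (-k)) := by
  rintro u ⟨hu0, hur⟩
  set t := log r - log u
  have ht : 0 ≤ t := sub_nonneg.2 (log_le_log hu0 hur)
  have hu : u = r * exp (-t) := by
    rw [neg_sub, exp_sub, exp_log hu0, exp_log hr]; field_simp
  refine mem_iUnion.2 ⟨⌊t⌋₊, ?_, ?_⟩ <;> rw [hu]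
  · gcongr; exact Nat.lt_floor_add_one t
  · gcongr; exact Nat.floor_le ht

lemma sqrt_abs_log_le_of_mem_Ioc {r u x : ℝ} (hr0 : 0 < r) (hr1 : r ≤ 1) (hx : 0 ≤ x)
    (hu : u ∈ Ioc (r * exp (-(x + 1))) (r * exp (-x))) : √|log u| ≤ √(-log r + x + 1) := by
  have hu0 : 0 < u := (by positivity : 0 < r * exp (-(x + 1))).trans hu.1
  rw [abs_of_nonpos (log_nonpos hu0.le (hu.2.trans ((mul_exp_neg_le hr0.le hx).trans hr1)))]
  gcongr
  have := log_lt_log (by positivity) hu.1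
  rw [log_mul hr0.ne' (exp_pos _).ne', log_exp] at this
  linarith

lemma logPower_mul_exp_neg_le (η β : ℝ) {r x : ℝ} (hr : 0 < r) (hL : 1 ≤ -log r) (hx : 0 ≤ x) :
    logPower η β (r * exp (-x)) ≤ logPower η β r * ((x + 1) ^ ⌈β⌉₊ * exp (-η * x)) := by
  have hlog : -log (r * exp (-x)) = -log r + x := by
    rw [log_mul hr.ne' (exp_pos _).ne', log_exp]; ring
  rw [logPower, hlog, mul_rpow hr.le (exp_pos _).le, ← exp_mul, logPower]
  calc r ^ η * exp (-x * η) * (-log r + x) ^ β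
      ≤ r ^ η * exp (-x * η) * ((-log r) ^ β * (x + 1) ^ ⌈β⌉₊) := by
        gcongr; exact rpow_add_le_rpow_mul_pow_natCeil β hL hx
    _ = r ^ η * (-log r) ^ β * ((x + 1) ^ ⌈β⌉₊ * exp (-η * x)) := by ring_nf

lemma lintegral_sqrt_abs_log_Ioc_mul_exp_le {p : StieltjesFunction ℝ} {η β r : ℝ} (hr0 : 0 < r)
    (hr1 : r ≤ exp (-1)) (hp : ∀ k : ℕ, p (r * exp (-k)) = logPower η β (r * exp (-k))) (k : ℕ) :
    ∫⁻ u in Ioc (r * exp (-(k + 1))) (r * exp (-k)), ENNReal.ofReal √|log u| ∂p.measure ≤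
      ENNReal.ofReal
        (√(-log r) * logPower η β r * (((k : ℝ) + 2) ^ (⌈β⌉₊ + 1) * exp (-η * k))) := by
  have hr1' : r ≤ 1 := hr1.trans (exp_le_one_iff.2 (by norm_num))
  have hL : 1 ≤ -log r := by linarith [(log_le_iff_le_exp hr0).2 hr1]
  have hmass : p.measure (Ioc (r * exp (-(k + 1))) (r * exp (-k))) ≤
      ENNReal.ofReal (logPower η β (r * exp (-k))) := by
    have hleft := hp (k + 1)
    push_cast at hleft
    rw [StieltjesFunction.measure_Ioc, ← hp k, hleft]
    exact ENNReal.ofReal_le_ofReal (sub_le_self _ (logPower_nonneg η β (by positivity)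
      ((mul_exp_neg_le hr0.le (by positivity)).trans hr1')))
  have hpiece : √(-log r + k + 1) * logPower η β (r * exp (-k)) ≤
      √(-log r) * logPower η β r * (((k : ℝ) + 2) ^ (⌈β⌉₊ + 1) * exp (-η * k)) := by
    have hlp := logPower_nonneg η β hr0.le hr1'
    calc √(-log r + k + 1) * logPower η β (r * exp (-k))
        ≤ (√(-log r) * (k + 1 + 1)) * (logPower η β r * ((k + 1) ^ ⌈β⌉₊ * exp (-η * k))) := by
          rw [add_assoc]
          exact mul_le_mul (sqrt_add_le_sqrt_mul_add_one hL (by positivity))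
            (logPower_mul_exp_neg_le η β hr0 hL k.cast_nonneg)
            (logPower_nonneg η β (by positivity) ((mul_exp_neg_le hr0.le k.cast_nonneg).trans hr1'))
            (by positivity)
      _ = √(-log r) * logPower η β r * ((k + 2) * (k + 1) ^ ⌈β⌉₊ * exp (-η * k)) := by ring
      _ ≤ √(-log r) * logPower η β r * (((k : ℝ) + 2) ^ (⌈β⌉₊ + 1) * exp (-η * k)) := by
          rw [pow_succ']; gcongr; linarith
  calc ∫⁻ u in Ioc (r * exp (-(k + 1))) (r * exp (-k)), ENNReal.ofReal √|log u| ∂p.measure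
      ≤ ∫⁻ _ in Ioc (r * exp (-(k + 1))) (r * exp (-k)), ENNReal.ofReal √(-log r + k + 1)
          ∂p.measure :=
        setLIntegral_mono measurable_const fun u hu =>
          ENNReal.ofReal_le_ofReal (sqrt_abs_log_le_of_mem_Ioc hr0 hr1' k.cast_nonneg hu)
    _ = ENNReal.ofReal √(-log r + k + 1) * p.measure (Ioc (r * exp (-(k + 1))) (r * exp (-k))) :=
        setLIntegral_const _ _
    _ ≤ ENNReal.ofReal √(-log r + k + 1) * ENNReal.ofReal (logPower η β (r * exp (-k))) := by
        gcongr
    _ ≤ _ := by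
        rw [← ENNReal.ofReal_mul (sqrt_nonneg _)]
        exact ENNReal.ofReal_le_ofReal hpiece

theorem stieltjes_log_integral_bound_general
    (η β : ℝ) (hη : 0 < η)
    (h₀ : ℝ) (hh₀ : h₀ ∈ Set.Ioc (0 : ℝ) (1 / Real.exp 1))
    (p : StieltjesFunction ℝ)
    (hp : ∀ h ∈ Set.Ioc (0 : ℝ) h₀, p h = h ^ η * (-Real.log h) ^ β) :
    ∃ c : ℝ, 0 < c ∧ ∀ r ∈ Set.Ioc (0 : ℝ) h₀,
      (∫⁻ u in Set.Ioc (0 : ℝ) r, ENNReal.ofReal (Real.sqrt |Real.log u|) ∂p.measure)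
        ≤ ENNReal.ofReal (c * r ^ η * (-Real.log r) ^ (β + 1 / 2)) := by
  set a : ℕ → ℝ := fun k => ((k : ℝ) + 2) ^ (⌈β⌉₊ + 1) * exp (-η * k)
  have ha : Summable a := summable_add_pow_mul_exp_neg_mul _ 2 hη
  refine ⟨∑' k, a k, ha.tsum_pos (fun k => by positivity) 0 (by positivity), ?_⟩
  rintro r ⟨hr0, hrh⟩
  have hr1 : r ≤ exp (-1) := by rw [exp_neg, inv_eq_one_div]; exact hrh.trans hh₀.2
  have hL : 0 < -log r := by linarith [(log_le_iff_le_exp hr0).2 hr1]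
  have hlp := logPower_nonneg η β hr0.le (hr1.trans (exp_le_one_iff.2 (by norm_num)))
  have hpk (k : ℕ) : p (r * exp (-k)) = logPower η β (r * exp (-k)) :=
    hp _ ⟨by positivity, (mul_exp_neg_le hr0.le k.cast_nonneg).trans hrh⟩
  calc ∫⁻ u in Ioc 0 r, ENNReal.ofReal √|log u| ∂p.measure
      ≤ ∑' k : ℕ, ∫⁻ u in Ioc (r * exp (-(k + 1))) (r * exp (-k)), ENNReal.ofReal √|log u|
          ∂p.measure :=
        (lintegral_mono_set (Ioc_zero_subset_iUnion_Ioc_mul_exp hr0)).trans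
          (lintegral_iUnion_le _ _)
    _ ≤ ∑' k, ENNReal.ofReal (√(-log r) * logPower η β r * a k) :=
        ENNReal.tsum_le_tsum (lintegral_sqrt_abs_log_Ioc_mul_exp_le hr0 hr1 hpk)
    _ = ENNReal.ofReal (√(-log r) * logPower η β r * ∑' k, a k) := by
        rw [← ENNReal.ofReal_tsum_of_nonneg (fun k => by positivity) (ha.mul_left _),
          tsum_mul_left]
    _ = ENNReal.ofReal ((∑' k, a k) * r ^ η * (-log r) ^ (β + 1 / 2)) := by
        rw [logPower, rpow_add hL, sqrt_eq_rpow]; ring_nf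

/-- Let `η > 0`, `β ∈ {0,1}`, `h₀ ∈ (0,1/e]` with `p(h) = h^η (−ln h)^β`
increasing on `(0,h₀]` (and `p(0)=0`, realized as a Stieltjes function). Then there is
`c > 0` with `∫_0^r √|ln u| dp(u) ≤ c r^η (−ln r)^{β+1/2}` for all `r ∈ (0,h₀]`. -/
theorem stieltjes_log_integral_bound
    (η β : ℝ) (hη : 0 < η) (hβ : β = 0 ∨ β = 1)
    (h₀ : ℝ) (hh₀ : h₀ ∈ Set.Ioc (0 : ℝ) (1 / Real.exp 1))
    (p : StieltjesFunction ℝ)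
    (hp0 : p 0 = 0)
    (hp : ∀ h ∈ Set.Ioc (0 : ℝ) h₀, p h = h ^ η * (-Real.log h) ^ β) :
    ∃ c : ℝ, 0 < c ∧ ∀ r ∈ Set.Ioc (0 : ℝ) h₀,
      (∫⁻ u in Set.Ioc (0 : ℝ) r, ENNReal.ofReal (Real.sqrt |Real.log u|) ∂p.measure)
        ≤ ENNReal.ofReal (c * r ^ η * (-Real.log r) ^ (β + 1 / 2)) :=
  stieltjes_log_integral_bound_general η β hη h₀ hh₀ p hp
end

section
/- Let (Ω, F, P) be a probability space and S'(K) the dual of a nuclear test-function space S(K) ⊂ L²(K,μ) with μ a probability measure. Fix α ∈ (0,2] and s ≥ 0, and let A : S(K) → C(K) be a linear operator with ‖A f‖_{L²(K,μ)} ≤ λ₁^{-s} ‖f‖_{L²(K,μ)} for some λ₁ > 0. Then the functional φ(f) = exp(−∫_K |A f|^α dμ) on S(K) is positive definite and continuous at 0 (with respect to any topology finer than the L² topology). In particular, φ(f_ℓ − f_j) arises as E[exp(i W(Af_ℓ)) · conj(exp(i W(Af_j)))] for a symmetric α-stable random measure W, whence ∑_{ℓ,j} a_ℓ conj(a_j)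 φ(f_ℓ − f_j) ≥ 0 for all complex a₁,…,a_n and f₁,…,f_n ∈ S(K). -/
/-!
For `α < 2` the Lévy–Khintchine formula `|t|^α = c_α⁻¹ ∫₀^∞ (1 - cos (t u)) u^(-1-α) du` together
with `(1 - cos a) + (1 - cos b) - (1 - cos (a - b)) = (1 - cos a)(1 - cos b) + sin a sin b` shows
that the matrix `|tᵢ|^α + |tⱼ|^α - |tᵢ - tⱼ|^α` is positive semidefinite (for `α = 2` it is
`2 tᵢ tⱼ`). Integrating over `K` gives the same for `ψ(fᵢ) + ψ(fⱼ) - ψ(fᵢ - fⱼ)` with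
`ψ f = ∫ |A f|^α dμ`, and by the Schur product theorem entrywise exponentials preserve positive
semidefiniteness, so `exp (-ψ (fᵢ - fⱼ))` is positive semidefinite (Schoenberg). Continuity at `0`
follows from Jensen: `ψ f ≤ (∫ (A f)² dμ)^(α/2)`.
-/

open MeasureTheory Filter Topology

namespace Matrix

open scoped ComplexOrder

variable {ι : Type*} [Fintype ι]

theorem PosSemidef.map_pow {𝕜 : Type*} [RCLike 𝕜] {M : Matrix ι ι 𝕜} (hM : M.PosSemidef) :
    ∀ m : ℕ, (M.map (· ^ m)).PosSemidef
  | 0 => by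
    have hone : M.map (· ^ 0) = vecMulVec (fun _ => 1) (star fun _ => 1) := by
      ext i j
      simp [vecMulVec_apply]
    rw [hone]
    exact posSemidef_vecMulVec_self_star _
  | m + 1 => by
    have hsplit : M.map (· ^ (m + 1)) = M.map (· ^ m) ⊙ M := by ext i j; simp [pow_succ]
    rw [hsplit]
    exact (hM.map_pow m).hadamard hM

theorem PosSemidef.map_exp {M : Matrix ι ι ℝ} (hM : M.PosSemidef) :
    (M.map Real.exp).PosSemidef := by
  refine .of_dotProduct_mulVec_nonneg ?_ fun x => ?_
  · ext i j
    simpa using hM.isHermitian.apply i j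
  · have hseries : HasSum (fun m : ℕ => star x ⬝ᵥ (M.map (· ^ m) *ᵥ x) / m.factorial)
        (star x ⬝ᵥ (M.map Real.exp *ᵥ x)) := by
      simp only [dotProduct, mulVec, map_apply, Finset.sum_div, Finset.mul_sum]
      refine hasSum_sum fun i _ => hasSum_sum fun j _ => ?_
      have hexp := ((NormedSpace.expSeries_div_hasSum_exp (M i j)).mul_right (x j)).mul_left
        (star x i)
      rw [← Real.exp_eq_exp_ℝ] at hexp
      refine hexp.congr_fun fun m => ?_
      ring
    exact hseries.nonneg fun m =>
      div_nonneg ((hM.map_pow m).dotProduct_mulVec_nonneg x) (by positivity)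

theorem posSemidef_map_exp_neg {D : Matrix ι ι ℝ} (ψ : ι → ℝ)
    (hD : (of fun i j => ψ i + ψ j - D i j).PosSemidef) :
    (D.map fun d => Real.exp (-d)).PosSemidef := by
  classical
  set e : ι → ℝ := fun i => Real.exp (-ψ i)
  have hconj : D.map (fun d => Real.exp (-d)) =
      (diagonal e)ᴴ * (of fun i j => ψ i + ψ j - D i j).map Real.exp * diagonal e := by
    ext i j
    simp only [e, diagonal_conjTranspose, star_trivial, diagonal_mul, mul_diagonal, map_apply,
      of_apply, ← Real.exp_add]
    congr 1
    ring
  rw [hconj]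
  exact hD.map_exp.conjTranspose_mul_mul_same _

theorem PosSemidef.map_ofReal {M : Matrix ι ι ℝ} (hM : M.PosSemidef) :
    (M.map ((↑) : ℝ → ℂ)).PosSemidef := by
  obtain ⟨m, v, rfl⟩ := posSemidef_iff_eq_sum_vecMulVec.mp hM
  have hsum : (∑ k, vecMulVec (v k) (star (v k))).map ((↑) : ℝ → ℂ) =
      ∑ k, vecMulVec (fun i => (v k i : ℂ)) (star fun i => (v k i : ℂ)) := by
    ext i j
    simp [sum_apply, vecMulVec_apply]
  rw [hsum]
  exact posSemidef_sum _ fun k _ => posSemidef_vecMulVec_self_star _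

theorem posSemidef_of_integral {X : Type*} [MeasurableSpace X] {ν : Measure X}
    {F : X → Matrix ι ι ℝ} (hint : ∀ i j, Integrable (fun x => F x i j) ν)
    (hF : ∀ᵐ x ∂ν, (F x).PosSemidef) :
    (of fun i j => ∫ x, F x i j ∂ν).PosSemidef := by
  refine .of_dotProduct_mulVec_nonneg ?_ fun v => ?_
  · ext i j
    simp only [conjTranspose_apply, of_apply, star_trivial]
    refine integral_congr_ae ?_
    filter_upwards [hF] with x hx using by simpa using hx.isHermitian.apply i j
  · have hquad : star v ⬝ᵥ (of (fun i j => ∫ x, F x i j ∂ν) *ᵥ v) =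
        ∫ x, star v ⬝ᵥ (F x *ᵥ v) ∂ν := by
      simp only [dotProduct, mulVec, of_apply, Finset.mul_sum]
      rw [integral_finsetSum _ fun i _ => integrable_finsetSum _ fun j _ =>
        ((hint i j).mul_const _).const_mul _]
      refine Finset.sum_congr rfl fun i _ => ?_
      rw [integral_finsetSum _ fun j _ => ((hint i j).mul_const _).const_mul _]
      refine Finset.sum_congr rfl fun j _ => ?_
      rw [integral_const_mul, integral_mul_const]
    rw [hquad]
    exact integral_nonneg_of_ae (hF.mono fun x hx => hx.dotProduct_mulVec_nonneg v)

theorem PosSemidef.sum_mul_conj_mul_nonneg {M : Matrix ι ι ℂ} (hM : M.PosSemidef) (a : ι → ℂ) :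
    0 ≤ ∑ i, ∑ j, a i * starRingEnd ℂ (a j) * M i j := by
  convert hM.dotProduct_mulVec_nonneg (star a) using 1
  simp only [dotProduct, mulVec, Finset.mul_sum, Pi.star_apply, star_star]
  exact Finset.sum_congr rfl fun i _ => Finset.sum_congr rfl fun j _ => by
    rw [Complex.star_def]
    ring

end Matrix

section LevyRepresentation

open Real Set

theorem integrableOn_one_sub_cos_mul_rpow {α : ℝ} (hα : 0 < α) (hα2 : α < 2) (t : ℝ) :
    IntegrableOn (fun u : ℝ => (1 - cos (t * u)) * u ^ (-1 - α)) (Ioi 0) := by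
  have hcont : ContinuousOn (fun u : ℝ => (1 - cos (t * u)) * u ^ (-1 - α)) (Ioi 0) :=
    (by fun_prop : Continuous fun u : ℝ => 1 - cos (t * u)).continuousOn.mul
      (continuousOn_id.rpow_const fun u hu => Or.inl (ne_of_gt hu))
  rw [← Ioc_union_Ioi_eq_Ioi zero_le_one]
  refine IntegrableOn.union ?_ ?_
  · have hdom : IntegrableOn (fun u : ℝ => t ^ 2 / 2 * u ^ (1 - α)) (Ioc 0 1) :=
      (intervalIntegral.intervalIntegrable_rpow' (by linarith)).1.const_mul _
    refine hdom.mono' ((hcont.mono Ioc_subset_Ioi_self).aestronglyMeasurable measurableSet_Ioc) ?_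
    filter_upwards [ae_restrict_mem measurableSet_Ioc] with u hu
    replace hu : 0 < u := hu.1
    have hcos : 1 - cos (t * u) ≤ t ^ 2 / 2 * u ^ (2 : ℝ) := by
      have := one_sub_sq_div_two_le_cos (x := t * u)
      rw [rpow_two]
      nlinarith
    calc ‖(1 - cos (t * u)) * u ^ (-1 - α)‖ = (1 - cos (t * u)) * u ^ (-1 - α) :=
          Real.norm_of_nonneg (mul_nonneg (by linarith [cos_le_one (t * u)]) (by positivity))
      _ ≤ t ^ 2 / 2 * u ^ (2 : ℝ) * u ^ (-1 - α) := by gcongr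
      _ = t ^ 2 / 2 * u ^ (1 - α) := by
          rw [mul_assoc, ← rpow_add hu]
          ring_nf
  · have hdom : IntegrableOn (fun u : ℝ => 2 * u ^ (-1 - α)) (Ioi 1) :=
      (integrableOn_Ioi_rpow_of_lt (by linarith) one_pos).const_mul _
    refine hdom.mono' ((hcont.mono fun u (hu : 1 < u) => zero_lt_one.trans hu).aestronglyMeasurable
      measurableSet_Ioi) ?_
    filter_upwards [ae_restrict_mem measurableSet_Ioi] with u (hu : 1 < u)
    have hw : 0 ≤ u ^ (-1 - α) := by positivity
    rw [Real.norm_of_nonneg (mul_nonneg (by linarith [cos_le_one (t * u)]) hw)]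
    exact mul_le_mul_of_nonneg_right (by linarith [neg_one_le_cos (t * u)]) hw

noncomputable def stableLevyConst (α : ℝ) : ℝ := ∫ u in Ioi 0, (1 - cos u) * u ^ (-1 - α)

theorem stableLevyConst_pos {α : ℝ} (hα : 0 < α) (hα2 : α < 2) : 0 < stableLevyConst α := by
  have hint := integrableOn_one_sub_cos_mul_rpow hα hα2 1
  simp only [one_mul] at hint
  rw [stableLevyConst, setIntegral_pos_iff_support_of_nonneg_ae ?_ hint]
  · have hsupp : Ioo 0 π ⊆ Function.support (fun u : ℝ => (1 - cos u) * u ^ (-1 - α)) ∩ Ioi 0 := by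
      intro u ⟨hu0, huπ⟩
      have hcos : cos u < 1 := cos_zero ▸ cos_lt_cos_of_nonneg_of_le_pi le_rfl huπ.le hu0
      exact ⟨(mul_pos (sub_pos.2 hcos) (rpow_pos_of_pos hu0 _)).ne', hu0⟩
    refine lt_of_lt_of_le ?_ (measure_mono hsupp)
    simp [pi_pos]
  · filter_upwards [ae_restrict_mem measurableSet_Ioi] with u (hu : 0 < u)
    exact mul_nonneg (by linarith [cos_le_one u]) (by positivity)

theorem integral_one_sub_cos_mul_rpow {α : ℝ} (hα : 0 < α) (t : ℝ) :
    ∫ u in Ioi 0, (1 - cos (t * u)) * u ^ (-1 - α) = |t| ^ α * stableLevyConst α := by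
  rcases eq_or_ne t 0 with rfl | ht
  · simp [zero_rpow hα.ne']
  have hb : 0 < |t| := abs_pos.2 ht
  have hcos : ∀ u, cos (t * u) = cos (|t| * u) := fun u => by
    rcases abs_choice t with h | h <;> rw [h]
    rw [neg_mul, cos_neg]
  calc ∫ u in Ioi 0, (1 - cos (t * u)) * u ^ (-1 - α)
      = ∫ u in Ioi 0, |t| ^ (1 + α) * ((1 - cos (|t| * u)) * (|t| * u) ^ (-1 - α)) := by
        refine setIntegral_congr_fun measurableSet_Ioi fun u (hu : 0 < u) => ?_
        rw [hcos, mul_rpow hb.le hu.le, mul_left_comm, ← mul_assoc (|t| ^ (1 + α)),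
          ← rpow_add hb, show 1 + α + (-1 - α) = 0 by ring, rpow_zero, one_mul]
    _ = |t| ^ (1 + α) * (|t|⁻¹ * stableLevyConst α) := by
        rw [integral_const_mul,
          integral_comp_mul_left_Ioi (fun v => (1 - cos v) * v ^ (-1 - α)) 0 hb, mul_zero,
          smul_eq_mul, stableLevyConst]
    _ = |t| ^ α * stableLevyConst α := by
        rw [← mul_assoc, ← rpow_neg_one, ← rpow_add hb]
        ring_nf

theorem posSemidef_rpow_abs_kernel {ι : Type*} [Fintype ι] {α : ℝ} (hα : 0 < α) (hα2 : α ≤ 2)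
    (t : ι → ℝ) : (Matrix.of fun i j => |t i| ^ α + |t j| ^ α - |t i - t j| ^ α).PosSemidef := by
  rcases hα2.eq_or_lt with rfl | hα2
  · have hquad : (Matrix.of fun i j => |t i| ^ (2 : ℝ) + |t j| ^ (2 : ℝ) - |t i - t j| ^ (2 : ℝ)) =
        (2 : ℝ) • Matrix.vecMulVec t (star t) := by
      ext i j
      simp only [Matrix.of_apply, Matrix.smul_apply, Matrix.vecMulVec_apply, star_trivial, rpow_two,
        sq_abs, smul_eq_mul]
      ring
    rw [hquad]
    exact (Matrix.posSemidef_vecMulVec_self_star t).smul zero_le_two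
  set g : ℝ → ℝ → ℝ := fun s u => (1 - cos (s * u)) * u ^ (-1 - α)
  have hint : ∀ s, IntegrableOn (g s) (Ioi 0) := integrableOn_one_sub_cos_mul_rpow hα hα2
  have hint2 : ∀ a b, IntegrableOn (fun u => g a u + g b u) (Ioi 0) :=
    fun a b => (hint a).add (hint b)
  have hC := stableLevyConst_pos hα hα2
  have hlevy : (Matrix.of fun i j => |t i| ^ α + |t j| ^ α - |t i - t j| ^ α) =
      (stableLevyConst α)⁻¹ •
        Matrix.of fun i j => ∫ u in Ioi 0, g (t i) u + g (t j) u - g (t i - t j) u := by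
    ext i j
    rw [Matrix.smul_apply, Matrix.of_apply, Matrix.of_apply,
      integral_sub (hint2 _ _) (hint _), integral_add (hint _) (hint _)]
    simp only [g, integral_one_sub_cos_mul_rpow hα, smul_eq_mul]
    field_simp
  rw [hlevy]
  refine (Matrix.posSemidef_of_integral (fun i j => (hint2 _ _).sub (hint _)) ?_).smul
    (inv_nonneg.2 hC.le)
  filter_upwards [ae_restrict_mem measurableSet_Ioi] with u (hu : 0 < u)
  -- `(1 - cos a) + (1 - cos b) - (1 - cos (a - b)) = (1 - cos a) (1 - cos b) + sin a sin b`
  set c : ι → ℝ := fun i => 1 - cos (t i * u)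
  set d : ι → ℝ := fun i => sin (t i * u)
  have hsq : (Matrix.of fun i j => g (t i) u + g (t j) u - g (t i - t j) u) =
      u ^ (-1 - α) • (Matrix.vecMulVec c (star c) + Matrix.vecMulVec d (star d)) := by
    ext i j
    simp only [g, c, d, Matrix.of_apply, Matrix.smul_apply, Matrix.add_apply,
      Matrix.vecMulVec_apply, star_trivial, smul_eq_mul, sub_mul, cos_sub]
    ring
  change (Matrix.of _).PosSemidef
  rw [hsq]
  exact ((Matrix.posSemidef_vecMulVec_self_star _).add
    (Matrix.posSemidef_vecMulVec_self_star _)).smul (rpow_pos_of_pos hu _).le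

end LevyRepresentation

theorem integral_rpow_abs_le_integral_sq_rpow {X : Type*} [MeasurableSpace X] {μ : Measure X}
    [IsProbabilityMeasure μ] {α : ℝ} (hα : 0 ≤ α) (hα2 : α ≤ 2) {f : X → ℝ}
    (hf : Integrable (fun x => f x ^ (2 : ℝ)) μ) (hfα : Integrable (fun x => |f x| ^ α) μ) :
    ∫ x, |f x| ^ α ∂μ ≤ (∫ x, f x ^ (2 : ℝ) ∂μ) ^ (α / 2) := by
  have hsq : ∀ x, (f x ^ (2 : ℝ)) ^ (α / 2) = |f x| ^ α := fun x => by
    rw [show f x ^ (2 : ℝ) = |f x| ^ (2 : ℝ) by rw [Real.rpow_two, Real.rpow_two, sq_abs],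
      ← Real.rpow_mul (abs_nonneg _)]
    ring_nf
  have hjensen := (Real.concaveOn_rpow (by positivity) (by linarith : α / 2 ≤ 1)).le_map_integral
    (f := fun x => f x ^ (2 : ℝ)) (continuousOn_id.rpow_const fun _ _ => Or.inr (by positivity))
    isClosed_Ici
    (ae_of_all _ fun x => Set.mem_Ici.2 (by rw [Real.rpow_two]; positivity)) hf
    (by simpa only [Function.comp_def, hsq] using hfα)
  simpa only [hsq] using hjensen

section StableFunctional

variable {K : Type*} [TopologicalSpace K] [CompactSpace K] [MeasurableSpace K]
  [OpensMeasurableSpace K] {μ : Measure K}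

theorem integrable_comp_continuousMap [IsFiniteMeasure μ] {p : ℝ → ℝ} (hp : Continuous p)
    (g : C(K, ℝ)) : Integrable (fun x => p (g x)) μ :=
  (hp.comp g.continuous).integrable_of_hasCompactSupport (.of_compactSpace _)

theorem tendsto_integral_rpow_abs_nhds_zero {E : Type*} [NormedAddCommGroup E] [NormedSpace ℝ E]
    [IsProbabilityMeasure μ] {α : ℝ} (hα : 0 < α) (hα2 : α ≤ 2) (A : E →ₗ[ℝ] C(K, ℝ)) (c : ℝ)
    (hA : ∀ f : E, ∫ x, (A f x) ^ (2 : ℝ) ∂μ ≤ c * ‖f‖ ^ (2 : ℝ)) :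
    Tendsto (fun f : E => ∫ x, |A f x| ^ α ∂μ) (𝓝 0) (𝓝 0) := by
  have hbound : ∀ f : E, ∫ x, |A f x| ^ α ∂μ ≤ (c * ‖f‖ ^ (2 : ℝ)) ^ (α / 2) := fun f =>
    (integral_rpow_abs_le_integral_sq_rpow hα.le hα2
      (integrable_comp_continuousMap (continuous_id.rpow_const fun _ => Or.inr zero_le_two) (A f))
      (integrable_comp_continuousMap (continuous_abs.rpow_const fun _ => Or.inr hα.le) (A f))).trans
    (Real.rpow_le_rpow (integral_nonneg fun x => by rw [Real.rpow_two]; positivity) (hA f)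
      (by positivity))
  have hmajorant : Tendsto (fun f : E => (c * ‖f‖ ^ (2 : ℝ)) ^ (α / 2)) (𝓝 0) (𝓝 0) := by
    have hcont : Continuous fun f : E => (c * ‖f‖ ^ (2 : ℝ)) ^ (α / 2) := by
      fun_prop (disch := positivity)
    simpa [Real.zero_rpow, hα.ne'] using hcont.tendsto 0
  exact tendsto_of_tendsto_of_tendsto_of_le_of_le tendsto_const_nhds hmajorant
    (fun f => integral_nonneg fun x => by positivity) hbound

theorem posSemidef_exp_neg_integral_rpow_abs {E ι : Type*} [AddCommGroup E] [Module ℝ E]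
    [Fintype ι] [IsFiniteMeasure μ] {α : ℝ} (hα : 0 < α) (hα2 : α ≤ 2) (A : E →ₗ[ℝ] C(K, ℝ))
    (f : ι → E) :
    (Matrix.of fun i j => Real.exp (-∫ x, |A (f i - f j) x| ^ α ∂μ)).PosSemidef := by
  have hint : ∀ g : E, Integrable (fun x => |A g x| ^ α) μ := fun g =>
    integrable_comp_continuousMap (continuous_abs.rpow_const fun _ => Or.inr hα.le) (A g)
  have hsum : ∀ g h : E, Integrable (fun x => |A g x| ^ α + |A h x| ^ α) μ :=
    fun g h => (hint g).add (hint h)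
  have hdiff : ∀ g h : E, Integrable (fun x => |A g x - A h x| ^ α) μ := fun g h => by
    simpa only [map_sub, ContinuousMap.sub_apply] using hint (g - h)
  refine Matrix.posSemidef_map_exp_neg (fun i => ∫ x, |A (f i) x| ^ α ∂μ) ?_
  have hkernel : (Matrix.of fun i j => ∫ x, |A (f i) x| ^ α ∂μ + ∫ x, |A (f j) x| ^ α ∂μ -
        ∫ x, |A (f i - f j) x| ^ α ∂μ) =
      Matrix.of fun i j =>
        ∫ x, |A (f i) x| ^ α + |A (f j) x| ^ α - |A (f i) x - A (f j) x| ^ α ∂μ := by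
    ext i j
    simp only [Matrix.of_apply, map_sub, ContinuousMap.sub_apply]
    rw [integral_sub (hsum _ _) (hdiff _ _), integral_add (hint _) (hint _)]
  rw [hkernel]
  exact Matrix.posSemidef_of_integral (fun i j => (hsum _ _).sub (hdiff _ _))
    (ae_of_all _ fun x => posSemidef_rpow_abs_kernel hα hα2 fun i => A (f i) x)

end StableFunctional

theorem stable_characteristic_functional_general
    {K E : Type*} [TopologicalSpace K] [CompactSpace K]
    [MeasurableSpace K] [OpensMeasurableSpace K]
    (μ : Measure K) [IsProbabilityMeasure μ]
    [NormedAddCommGroup E] [NormedSpace ℝ E]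
    (α s lam₁ : ℝ) (hα : 0 < α) (hα2 : α ≤ 2)
    (A : E →ₗ[ℝ] C(K, ℝ))
    (hAbound : ∀ f : E, ∫ x, (A f x) ^ (2 : ℝ) ∂μ ≤ lam₁ ^ (-(2 * s)) * ‖f‖ ^ (2 : ℝ))
    (φ : E → ℝ)
    (hφ : ∀ f : E, φ f = Real.exp (-∫ x, |A f x| ^ α ∂μ)) :
    Tendsto φ (nhds 0) (nhds 1) ∧
      ∀ (n : ℕ) (a : Fin n → ℂ) (f : Fin n → E),
        (∑ ℓ, ∑ j, a ℓ * (starRingEnd ℂ) (a j) * (φ (f ℓ - f j) : ℂ)).im = 0 ∧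
        0 ≤ (∑ ℓ, ∑ j, a ℓ * (starRingEnd ℂ) (a j) * (φ (f ℓ - f j) : ℂ)).re := by
  obtain rfl : φ = fun f => Real.exp (-∫ x, |A f x| ^ α ∂μ) := funext hφ
  refine ⟨?_, fun n a f => ?_⟩
  · simpa [Function.comp_def] using (Real.continuous_exp.tendsto _).comp
      (tendsto_integral_rpow_abs_nhds_zero hα hα2 A _ hAbound).neg
  · have hpsd := posSemidef_exp_neg_integral_rpow_abs (μ := μ) hα hα2 A f
    obtain ⟨hre, him⟩ := Complex.nonneg_iff.1 (hpsd.map_ofReal.sum_mul_conj_mul_nonneg a)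
    exact ⟨him.symm, hre⟩

/-- For a probability measure `μ`, `α ∈ (0,2]`, and a linear operator
`A : S(K) → C(K)` with `‖A f‖_{L²} ≤ λ₁^{-s} ‖f‖`, the functional
`φ(f) = exp(−∫ |A f|^α dμ)` is continuous at `0` and positive definite:
`∑_{ℓ,j} a_ℓ conj(a_j) φ(f_ℓ − f_j)` is real and nonnegative. -/
theorem stable_characteristic_functional
    {K E : Type*} [TopologicalSpace K] [CompactSpace K]
    [MeasurableSpace K] [OpensMeasurableSpace K]
    (μ : Measure K) [IsProbabilityMeasure μ]
    [NormedAddCommGroup E] [NormedSpace ℝ E]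
    (α s lam₁ : ℝ) (hα : 0 < α) (hα2 : α ≤ 2) (hs : 0 ≤ s) (hlam₁ : 0 < lam₁)
    (A : E →ₗ[ℝ] C(K, ℝ))
    (hAbound : ∀ f : E, ∫ x, (A f x) ^ (2 : ℝ) ∂μ ≤ lam₁ ^ (-(2 * s)) * ‖f‖ ^ (2 : ℝ))
    (φ : E → ℝ)
    (hφ : ∀ f : E, φ f = Real.exp (-∫ x, |A f x| ^ α ∂μ)) :
    Tendsto φ (nhds 0) (nhds 1) ∧
      ∀ (n : ℕ) (a : Fin n → ℂ) (f : Fin n → E),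
        (∑ ℓ, ∑ j, a ℓ * (starRingEnd ℂ) (a j) * (φ (f ℓ - f j) : ℂ)).im = 0 ∧
        0 ≤ (∑ ℓ, ∑ j, a ℓ * (starRingEnd ℂ) (a j) * (φ (f ℓ - f j) : ℂ)).re :=
  stable_characteristic_functional_general μ α s lam₁ hα hα2 A hAbound φ hφ
end
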